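/- arXiv:2309.08945 — 3 statements merged into one kernel-verified Lean document; each statement's English description precedes it below -/
import Mathlib

section
/- For any probability vector p in the interior of the simplex and any matrix B ∈ R^{K×D}, the largest eigenvalue of B^T(diag(p) − p p^T)B is strictly less than ‖B‖², where ‖B‖ is the spectral norm. -/
open scoped BigOperators Matrix

/-- The spectral (ℓ₂ operator) norm of a real matrix. -/
noncomputable def specNorm {m n : ℕ} (M : Matrix (Fin m) (Fin n) ℝ) : ℝ :=
  ‖LinearMap.toContinuousLinearMap (Matrix.toEuclideanLin M)‖

lemma specNorm_pos {m n : ℕ} (M : Matrix (Fin m) (Fin n) ℝ) (hM : M ≠ 0) :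
    0 < specNorm M := by
  rw [specNorm, norm_pos_iff]
  intro h
  apply hM
  have h0 : Matrix.toEuclideanLin M = 0 := by
    ext v j
    have := DFunLike.congr_fun h v
    simpa using congr_fun congr(WithLp.equiv 2 _ $this) j
  simpa using congr(Matrix.toEuclideanLin.symm $h0)

lemma var_lt {K : ℕ} (p y : Fin K → ℝ) (hpos : ∀ i, 0 < p i) (hsum : ∑ i, p i = 1)
    (hy : y ≠ 0) :
    ∑ i, p i * y i ^ 2 - (∑ i, p i * y i) ^ 2 < ∑ i, y i ^ 2 := by
  obtain ⟨k, hk⟩ := Function.ne_iff.mp hy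
  simp only [Pi.zero_apply] at hk
  have hple : ∀ i, p i ≤ 1 := by
    intro i
    rw [← hsum]
    exact Finset.single_le_sum (fun j _ => (hpos j).le) (Finset.mem_univ i)
  by_cases hm : (∑ i, p i * y i) = 0
  · have hpk : p k < 1 := by
      rcases lt_or_eq_of_le (hple k) with h | h
      · exact h
      exfalso
      have hrest : ∑ j ∈ Finset.univ.erase k, p j = 0 := by
        have := Finset.add_sum_erase Finset.univ p (Finset.mem_univ k)
        rw [hsum, ← h] at this
        linarith
      have hall : ∀ j ∈ Finset.univ.erase k, p j = 0 :=
        (Finset.sum_eq_zero_iff_of_nonneg (fun j _ => (hpos j).le)).mp hrest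
      have hsingle : (∑ i, p i * y i) = p k * y k := by
        apply Finset.sum_eq_single
        · intro b _ hb
          have : p b = 0 := hall b (Finset.mem_erase.mpr ⟨hb, Finset.mem_univ b⟩)
          rw [this, zero_mul]
        · simp
      rw [hm, h, one_mul] at hsingle
      exact hk hsingle.symm
    have hyk : 0 < y k ^ 2 := by positivity
    have h1 : ∑ i, p i * y i ^ 2 < ∑ i, y i ^ 2 := by
      apply Finset.sum_lt_sum
      · intro i _
        nlinarith [sq_nonneg (y i), hple i, hpos i]
      · exact ⟨k, Finset.mem_univ k, by nlinarith⟩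
    nlinarith [sq_nonneg (∑ i, p i * y i)]
  · have h1 : ∑ i, p i * y i ^ 2 ≤ ∑ i, y i ^ 2 :=
      Finset.sum_le_sum fun i _ => by nlinarith [sq_nonneg (y i), hple i, hpos i]
    have h2 : 0 < (∑ i, p i * y i) ^ 2 := by positivity
    linarith

/-- every eigenvalue of `Bᵀ(diag(p) − p pᵀ)B` is strictly smaller than `‖B‖²`. -/
theorem eigenvalues_lt_sq_specNorm {K D : ℕ} (p : Fin K → ℝ)
    (hpos : ∀ i, 0 < p i) (hsum : ∑ i, p i = 1)
    (B : Matrix (Fin K) (Fin D) ℝ) (hB : B ≠ 0)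
    (hM : (Bᵀ * (Matrix.diagonal p - Matrix.vecMulVec p p) * B).IsHermitian) :
    ∀ i : Fin D, hM.eigenvalues i < specNorm B ^ 2 := by
  intro i
  set v : EuclideanSpace ℝ (Fin D) := hM.eigenvectorBasis i with hv
  have hnv : ‖v‖ = 1 := hM.eigenvectorBasis.orthonormal.1 i
  set y : Fin K → ℝ := B *ᵥ ⇑v with hy
  -- the eigenvalue is the variance of `y` under `p`
  have heig : hM.eigenvalues i = ∑ k, p k * y k ^ 2 - (∑ k, p k * y k) ^ 2 := by
    have step : hM.eigenvalues i =
        y ⬝ᵥ ((Matrix.diagonal p - Matrix.vecMulVec p p) *ᵥ y) := by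
      rw [hM.eigenvalues_eq, ← Matrix.mulVec_mulVec, ← Matrix.mulVec_mulVec,
        Matrix.dotProduct_mulVec, Matrix.vecMul_transpose]
      simp [hy, hv]
    rw [step, Matrix.sub_mulVec, dotProduct_sub]
    congr 1
    · simp only [dotProduct, Matrix.mulVec_diagonal]
      exact Finset.sum_congr rfl fun k _ => by ring
    · simp only [dotProduct, Matrix.mulVec, Matrix.vecMulVec_apply, sq,
        Finset.sum_mul_sum]
      rw [Finset.sum_comm]
      refine Finset.sum_congr rfl fun k _ => ?_
      simp only [Finset.mul_sum, Finset.sum_mul]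
      exact Finset.sum_congr rfl fun j _ => by ring
  -- the sum of squares of `y` is at most `specNorm B ^ 2`
  have hyb : ∑ k, y k ^ 2 ≤ specNorm B ^ 2 := by
    have hEy : (Matrix.toEuclideanLin B) v = (WithLp.equiv 2 (Fin K → ℝ)).symm y := rfl
    have h1 : ‖(Matrix.toEuclideanLin B) v‖ ≤ specNorm B := by
      calc ‖(Matrix.toEuclideanLin B) v‖
          ≤ specNorm B * ‖v‖ :=
            (LinearMap.toContinuousLinearMap (Matrix.toEuclideanLin B)).le_opNorm v
        _ = specNorm B := by rw [hnv, mul_one]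
    have h2 : ‖(Matrix.toEuclideanLin B) v‖ ^ 2 = ∑ k, y k ^ 2 := by
      rw [hEy, EuclideanSpace.norm_eq,
        Real.sq_sqrt (Finset.sum_nonneg fun k _ => sq_nonneg _)]
      simp [sq_abs]
    calc ∑ k, y k ^ 2 = ‖(Matrix.toEuclideanLin B) v‖ ^ 2 := h2.symm
      _ ≤ specNorm B ^ 2 := pow_le_pow_left₀ (norm_nonneg _) h1 2
  by_cases hy0 : y = 0
  · have : hM.eigenvalues i = 0 := by
      rw [heig, hy0]
      simp
    rw [this]
    have := specNorm_pos B hB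
    positivity
  · calc hM.eigenvalues i = ∑ k, p k * y k ^ 2 - (∑ k, p k * y k) ^ 2 := heig
      _ < ∑ k, y k ^ 2 := var_lt p y hpos hsum hy0
      _ ≤ specNorm B ^ 2 := hyb
end

section
/- The condition number of the Hessian ∇²E(x) is bounded above by 1 + ‖Ā_k‖²/λ for all x ∈ R^D. -/
open scoped BigOperators Matrix

/-- The softmax Hessian form `λ I + Āᵀ (diag(p) − p pᵀ) Ā`. -/
noncomputable def hessE {K D : ℕ} (lam : ℝ) (Ab : Matrix (Fin K) (Fin D) ℝ)
    (p : Fin K → ℝ) : Matrix (Fin D) (Fin D) ℝ :=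
  lam • (1 : Matrix (Fin D) (Fin D) ℝ) +
    Abᵀ * (Matrix.diagonal p - Matrix.vecMulVec p p) * Ab

/-! For a probability vector `p`, the quadratic form of `diag p - p pᵀ` at `y` is the variance
of `y` under `p`, which lies between `0` and the second moment `∑ pᵢ yᵢ² ≤ |y|²`. With `y = Ā v`
and `|Ā v| ≤ ‖Ā‖ |v|`, the quadratic form of `∇²E` is squeezed between `λ |v|²` and
`(λ + ‖Ā‖²) |v|²`, so every eigenvalue lies in `[λ, λ + ‖Ā‖²]` and the ratio of any two is at most
`(λ + ‖Ā‖²) / λ`. -/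

open Matrix

section

variable {ι : Type*} [Fintype ι]

lemma dotProduct_self_eq_norm_sq (v : ι → ℝ) :
    v ⬝ᵥ v = ‖(WithLp.toLp 2 v : EuclideanSpace ℝ ι)‖ ^ 2 := by
  rw [← real_inner_self_eq_norm_sq, EuclideanSpace.inner_toLp_toLp, star_trivial]

lemma sq_sum_mul_le_sum_mul_sq {p : ι → ℝ} (hp : ∀ i, 0 ≤ p i) (hsum : ∑ i, p i = 1)
    (y : ι → ℝ) : (∑ i, p i * y i) ^ 2 ≤ ∑ i, p i * y i ^ 2 := by
  simpa [hsum] using Finset.sum_sq_le_sum_mul_sum_of_sq_le_mul Finset.univ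
    (fun i _ => hp i) (fun i _ => mul_nonneg (hp i) (sq_nonneg (y i)))
    (fun i _ => (by ring : (p i * y i) ^ 2 = p i * (p i * y i ^ 2)).le)

lemma sum_mul_sq_le_dotProduct_self {p : ι → ℝ} (hp : ∀ i, 0 ≤ p i) (hsum : ∑ i, p i = 1)
    (y : ι → ℝ) : ∑ i, p i * y i ^ 2 ≤ y ⬝ᵥ y := by
  refine Finset.sum_le_sum fun i _ => ?_
  have hp1 : p i ≤ 1 := hsum ▸ Finset.single_le_sum (fun j _ => hp j) (Finset.mem_univ i)
  nlinarith [sq_nonneg (y i)]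

variable [DecidableEq ι]

lemma dotProduct_diagonal_sub_vecMulVec_mulVec (p y : ι → ℝ) :
    y ⬝ᵥ ((diagonal p - vecMulVec p p) *ᵥ y) = ∑ i, p i * y i ^ 2 - (∑ i, p i * y i) ^ 2 := by
  have hdiag : y ⬝ᵥ (diagonal p *ᵥ y) = ∑ i, p i * y i ^ 2 := by
    simp only [mulVec_diagonal, dotProduct]
    exact Finset.sum_congr rfl fun i _ => by ring
  have hrank1 : y ⬝ᵥ (vecMulVec p p *ᵥ y) = (∑ i, p i * y i) ^ 2 := by
    simp only [dotProduct, vecMulVec_apply, mulVec, sq, Finset.mul_sum, Finset.sum_mul]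
    exact Finset.sum_congr rfl fun i _ => Finset.sum_congr rfl fun j _ => by ring
  rw [sub_mulVec, dotProduct_sub, hdiag, hrank1]

lemma dotProduct_diagonal_sub_vecMulVec_mulVec_mem_Icc {p : ι → ℝ} (hp : ∀ i, 0 ≤ p i)
    (hsum : ∑ i, p i = 1) (y : ι → ℝ) :
    y ⬝ᵥ ((diagonal p - vecMulVec p p) *ᵥ y) ∈ Set.Icc 0 (y ⬝ᵥ y) := by
  rw [dotProduct_diagonal_sub_vecMulVec_mulVec]
  have := sq_sum_mul_le_sum_mul_sq hp hsum y
  have := sum_mul_sq_le_dotProduct_self hp hsum y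
  constructor <;> linarith [sq_nonneg (∑ i, p i * y i)]

end

lemma dotProduct_self_mulVec_le_specNorm_sq_mul {m n : ℕ} (A : Matrix (Fin m) (Fin n) ℝ)
    (v : Fin n → ℝ) :
    (A *ᵥ v) ⬝ᵥ (A *ᵥ v) ≤ specNorm A ^ 2 * (v ⬝ᵥ v) := by
  rw [dotProduct_self_eq_norm_sq, dotProduct_self_eq_norm_sq, ← mul_pow]
  gcongr
  exact (LinearMap.toContinuousLinearMap (toEuclideanLin A)).le_opNorm (WithLp.toLp 2 v)

lemma Matrix.IsHermitian.eigenvalues_mem_Icc_of_dotProduct_mulVec {n : Type*} [Fintype n]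
    [DecidableEq n] {H : Matrix n n ℝ} (hH : H.IsHermitian) {a b : ℝ}
    (hform : ∀ v, a * (v ⬝ᵥ v) ≤ v ⬝ᵥ (H *ᵥ v) ∧ v ⬝ᵥ (H *ᵥ v) ≤ b * (v ⬝ᵥ v)) (k : n) :
    hH.eigenvalues k ∈ Set.Icc a b := by
  set v := ⇑(hH.eigenvectorBasis k)
  have hunit : v ⬝ᵥ v = 1 := by
    rw [dotProduct_self_eq_norm_sq]
    simp only [v, WithLp.toLp_ofLp, OrthonormalBasis.norm_eq_one, one_pow]
  have hform_v := hform v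
  rw [hunit, hH.mulVec_eigenvectorBasis, dotProduct_smul, hunit] at hform_v
  simpa using hform_v

lemma dotProduct_hessE_mulVec {K D : ℕ} (lam : ℝ) (Ab : Matrix (Fin K) (Fin D) ℝ)
    (p : Fin K → ℝ) (v : Fin D → ℝ) :
    v ⬝ᵥ (hessE lam Ab p *ᵥ v) =
      lam * (v ⬝ᵥ v) + (Ab *ᵥ v) ⬝ᵥ ((diagonal p - vecMulVec p p) *ᵥ (Ab *ᵥ v)) := by
  rw [hessE, add_mulVec, dotProduct_add, smul_mulVec, one_mulVec, dotProduct_smul, smul_eq_mul,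
    ← mulVec_mulVec, ← mulVec_mulVec, dotProduct_mulVec, vecMul_transpose]

lemma hessE_eigenvalues_mem_Icc {K D : ℕ} (lam : ℝ) (Ab : Matrix (Fin K) (Fin D) ℝ)
    {p : Fin K → ℝ} (hp : ∀ i, 0 ≤ p i) (hsum : ∑ i, p i = 1)
    (hH : (hessE lam Ab p).IsHermitian) (k : Fin D) :
    hH.eigenvalues k ∈ Set.Icc lam (lam + specNorm Ab ^ 2) := by
  refine hH.eigenvalues_mem_Icc_of_dotProduct_mulVec (fun v => ?_) k
  obtain ⟨hvar_nonneg, hvar_le⟩ :=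
    dotProduct_diagonal_sub_vecMulVec_mulVec_mem_Icc hp hsum (Ab *ᵥ v)
  have := dotProduct_self_mulVec_le_specNorm_sq_mul Ab v
  rw [dotProduct_hessE_mulVec]
  constructor <;> linarith

/-- the condition number of the Hessian (ratio of largest to smallest
eigenvalue, hence any ratio of eigenvalues) is at most `1 + ‖Ā‖²/λ`. -/
theorem hessE_condition_number_le {K D : ℕ} (lam : ℝ) (hlam : 0 < lam)
    (Ab : Matrix (Fin K) (Fin D) ℝ) (p : Fin K → ℝ)
    (hpos : ∀ i, 0 < p i) (hsum : ∑ i, p i = 1)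
    (hH : (hessE lam Ab p).IsHermitian) :
    ∀ i j : Fin D, hH.eigenvalues i / hH.eigenvalues j ≤ 1 + specNorm Ab ^ 2 / lam := by
  intro i j
  have hbounds := hessE_eigenvalues_mem_Icc lam Ab (fun k => (hpos k).le) hsum hH
  obtain ⟨hi_lower, hi_upper⟩ := hbounds i
  obtain ⟨hj_lower, -⟩ := hbounds j
  calc hH.eigenvalues i / hH.eigenvalues j
      ≤ (lam + specNorm Ab ^ 2) / lam := div_le_div₀ (by linarith) hi_upper hlam hj_lower
    _ = 1 + specNorm Ab ^ 2 / lam := by field_simp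
end

section
/- For logistic regression with p_1(x) = 1/(1 + e^{w^T x + w_0}), the unique minimizer of E(x) = (λ/2)‖x − x̄‖² + ln(1 + e^{w^T x + w_0}) is x* = x̄ − (1/λ)(1 − p*_1) w, where p*_1 ∈ (0,1) is the unique solution of p*_1 = 1/(1 + exp(α p*_1 + β)) with α = ‖w‖²/λ and β = w^T x̄ + w_0 − α. -/
open scoped BigOperators RealInnerProductSpace

/-- Logistic-regression class-1 probability. -/
noncomputable def p1 {D : ℕ} (w : EuclideanSpace ℝ (Fin D)) (w0 : ℝ)
    (x : EuclideanSpace ℝ (Fin D)) : ℝ :=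
  1 / (1 + Real.exp (⟪w, x⟫ + w0))

/-- Logistic-regression inverse-classification objective. -/
noncomputable def Elr {D : ℕ} (w : EuclideanSpace ℝ (Fin D)) (w0 : ℝ) (lam : ℝ)
    (xbar : EuclideanSpace ℝ (Fin D)) (x : EuclideanSpace ℝ (Fin D)) : ℝ :=
  lam / 2 * ‖x - xbar‖ ^ 2 + Real.log (1 + Real.exp (⟪w, x⟫ + w0))

/-!
`E` is a ridge term plus the convex function `y ↦ softplus (⟪w, y⟫ + w₀)`, whose tangent plane at
`x` has slope `sigmoid (⟪w, x⟫ + w₀) • w`. Hence any stationary point `x*` satisfies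
`E x* + (λ/2) ‖y - x*‖² ≤ E y`, which makes it the unique minimizer. The fixed-point equation for
`p₁*` says exactly that `1 - p₁* = sigmoid (⟪w, x*⟫ + w₀)`, i.e. that `x*` is stationary.
-/

open Real

noncomputable def softplus (x : ℝ) : ℝ := log (1 + exp x)

lemma one_sub_sigmoid (x : ℝ) : 1 - sigmoid x = (1 + exp x)⁻¹ := by
  rw [← sigmoid_neg, sigmoid_def, neg_neg]

lemma softplus_add_sigmoid_mul_sub_le (s t : ℝ) :
    softplus s + sigmoid s * (t - s) ≤ softplus t := by
  have hs : (0 : ℝ) < 1 + exp s := by positivity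
  -- Convexity of `exp` on `0, t - s` with weights `1 - sigmoid s, sigmoid s`; the mixture of
  -- values is `(1 + exp t) / (1 + exp s)`.
  have hconv := convexOn_exp.2 (Set.mem_univ 0) (Set.mem_univ (t - s))
    (sub_nonneg.2 (sigmoid_le_one s)) (sigmoid_nonneg s) (sub_add_cancel 1 _)
  have hmix : (1 - sigmoid s) • exp 0 + sigmoid s • exp (t - s) = (1 + exp t) / (1 + exp s) := by
    rw [smul_eq_mul, smul_eq_mul, ← sub_sub_cancel 1 (sigmoid s), one_sub_sigmoid, exp_zero,
      exp_sub]
    field_simp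
    ring
  rw [hmix, smul_zero, zero_add, smul_eq_mul] at hconv
  have hlog := (log_le_log_iff (exp_pos _) (by positivity)).2 hconv
  rw [log_exp, log_div (by positivity) hs.ne'] at hlog
  unfold softplus
  linarith

lemma softplus_inner_add_sigmoid_smul_le {F : Type*} [NormedAddCommGroup F]
    [InnerProductSpace ℝ F] (w : F) (w0 : ℝ) (x y : F) :
    softplus (⟪w, x⟫ + w0) + ⟪sigmoid (⟪w, x⟫ + w0) • w, y - x⟫ ≤ softplus (⟪w, y⟫ + w0) := by
  have := softplus_add_sigmoid_mul_sub_le (⟪w, x⟫ + w0) (⟪w, y⟫ + w0)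
  rwa [real_inner_smul_left, inner_sub_right, ← add_sub_add_right_eq_sub _ _ w0]

lemma add_half_mul_sq_norm_le_of_subgradient {F : Type*} [NormedAddCommGroup F]
    [InnerProductSpace ℝ F] {φ : F → ℝ} {lam : ℝ} {xbar x g : F}
    (hg : ∀ y, φ x + ⟪g, y - x⟫ ≤ φ y) (hx : lam • (x - xbar) + g = 0) (y : F) :
    lam / 2 * ‖x - xbar‖ ^ 2 + φ x + lam / 2 * ‖y - x‖ ^ 2 ≤ lam / 2 * ‖y - xbar‖ ^ 2 + φ y := by
  have hsplit : ‖y - xbar‖ ^ 2 = ‖x - xbar‖ ^ 2 + 2 * ⟪x - xbar, y - x⟫ + ‖y - x‖ ^ 2 := by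
    rw [← norm_add_sq_real, add_comm, sub_add_sub_cancel]
  have hinner : ⟪g, y - x⟫ = -(lam * ⟪x - xbar, y - x⟫) := by
    rw [eq_neg_of_add_eq_zero_right hx, inner_neg_left, real_inner_smul_left]
  have := hg y
  rw [hsplit]
  linarith

lemma unique_min_of_quadratic_growth {F : Type*} [NormedAddCommGroup F] {f : F → ℝ} {c : ℝ}
    {x : F} (hc : 0 < c) (hf : ∀ y, f x + c * ‖y - x‖ ^ 2 ≤ f y) :
    (∀ y, f x ≤ f y) ∧ ∀ z, (∀ y, f z ≤ f y) → z = x := by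
  refine ⟨fun y => (le_add_of_nonneg_right (by positivity)).trans (hf y), fun z hz => ?_⟩
  have hzero : c * ‖z - x‖ ^ 2 ≤ 0 := by linarith [hf z, hz x]
  have : ‖z - x‖ ^ 2 = 0 := le_antisymm (nonpos_of_mul_nonpos_right hzero hc) (sq_nonneg _)
  exact sub_eq_zero.1 (norm_eq_zero.1 (pow_eq_zero_iff two_ne_zero |>.1 this))

theorem logreg_closed_form_minimizer_general {D : ℕ} (w : EuclideanSpace ℝ (Fin D))
    (w0 lam : ℝ) (hlam : 0 < lam) (xbar : EuclideanSpace ℝ (Fin D))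
    (pstar : ℝ)
    (hfix : pstar = 1 / (1 + Real.exp (‖w‖ ^ 2 / lam * pstar +
      (⟪w, xbar⟫ + w0 - ‖w‖ ^ 2 / lam)))) :
    (∀ y, Elr w w0 lam xbar (xbar - ((1 - pstar) / lam) • w) ≤ Elr w w0 lam xbar y) ∧
      ∀ z, (∀ y, Elr w w0 lam xbar z ≤ Elr w w0 lam xbar y) →
        z = xbar - ((1 - pstar) / lam) • w := by
  set xs := xbar - ((1 - pstar) / lam) • w
  have hscore : ⟪w, xs⟫ + w0 = ‖w‖ ^ 2 / lam * pstar + (⟪w, xbar⟫ + w0 - ‖w‖ ^ 2 / lam) := by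
    rw [inner_sub_right, real_inner_smul_right, real_inner_self_eq_norm_sq]
    ring
  have hsigmoid : sigmoid (⟪w, xs⟫ + w0) = 1 - pstar := by
    rw [hfix, ← hscore, one_div, ← one_sub_sigmoid, sub_sub_cancel]
  have hstationary : lam • (xs - xbar) + sigmoid (⟪w, xs⟫ + w0) • w = 0 := by
    rw [hsigmoid, sub_sub_cancel_left, smul_neg, smul_smul, mul_div_cancel₀ _ hlam.ne',
      neg_add_cancel]
  exact unique_min_of_quadratic_growth (half_pos hlam)
    (add_half_mul_sq_norm_le_of_subgradient (φ := fun y => softplus (⟪w, y⟫ + w0))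
      (softplus_inner_add_sigmoid_smul_le w w0 xs) hstationary)

/-- the unique minimizer of the logistic-regression objective is
`x* = x̄ − (1/λ)(1 − p₁*) w`, where `p₁* ∈ (0,1)` solves `p₁* = 1/(1+exp(α p₁* + β))`
with `α = ‖w‖²/λ` and `β = wᵀx̄ + w₀ − α`. -/
theorem logreg_closed_form_minimizer {D : ℕ} (w : EuclideanSpace ℝ (Fin D)) (hw : w ≠ 0)
    (w0 lam : ℝ) (hlam : 0 < lam) (xbar : EuclideanSpace ℝ (Fin D))
    (pstar : ℝ) (hp0 : 0 < pstar) (hp1 : pstar < 1)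
    (hfix : pstar = 1 / (1 + Real.exp (‖w‖ ^ 2 / lam * pstar +
      (⟪w, xbar⟫ + w0 - ‖w‖ ^ 2 / lam)))) :
    (∀ y, Elr w w0 lam xbar (xbar - ((1 - pstar) / lam) • w) ≤ Elr w w0 lam xbar y) ∧
      ∀ z, (∀ y, Elr w w0 lam xbar z ≤ Elr w w0 lam xbar y) →
        z = xbar - ((1 - pstar) / lam) • w :=
  logreg_closed_form_minimizer_general w w0 lam hlam xbar pstar hfix
end
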